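/- With notation as in the context, there exists a real number L such that C·R = L·Q(Ricc, R) (equality of (0,6)-tensors) if and only if μ = 0. (This is the pointwise algebraic form of: for a Wintgen ideal submanifold, C·R and Q(Ricc, R) are linearly dependent iff it is totally umbilical, and hence conformally flat.) -/
import Mathlib


noncomputable section

namespace Wintgen

/-- The standard inner product `g` on `ℝ^n`. -/
def gg (n : ℕ) (x y : Fin n → ℝ) : ℝ := ∑ i, x i * y i

/-- The standard orthonormal basis vectors `E_i` (0-indexed). -/
def E (n : ℕ) (i : Fin n) : Fin n → ℝ := fun j => if j = i then 1 else 0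

/-- Auxiliary: the `j`-th coordinate of `x` (0 if out of range). -/
def coord (n : ℕ) (x : Fin n → ℝ) (j : ℕ) : ℝ := if h : j < n then x ⟨j, h⟩ else 0

/-- The Choi–Lu shape operator `A_1`. -/
def A1 (n : ℕ) (a μ : ℝ) (x : Fin n → ℝ) : Fin n → ℝ := fun i =>
  if (i : ℕ) = 0 then a * x i + μ * coord n x 1
  else if (i : ℕ) = 1 then μ * coord n x 0 + a * x i
  else a * x i

/-- The Choi–Lu shape operator `A_2`. -/
def A2 (n : ℕ) (b μ : ℝ) (x : Fin n → ℝ) : Fin n → ℝ := fun i =>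
  if (i : ℕ) = 0 then (b + μ) * x i
  else if (i : ℕ) = 1 then (b - μ) * x i
  else b * x i

/-- The Choi–Lu shape operator `A_3 = c • id`. -/
def A3 (n : ℕ) (c : ℝ) (x : Fin n → ℝ) : Fin n → ℝ := fun i => c * x i

/-- The Gauss-equation curvature tensor `R`. -/
def Rt (n : ℕ) (a b c μ k : ℝ) (X Y Z W : Fin n → ℝ) : ℝ :=
  (gg n (A1 n a μ X) W * gg n (A1 n a μ Y) Z - gg n (A1 n a μ X) Z * gg n (A1 n a μ Y) W)
  + (gg n (A2 n b μ X) W * gg n (A2 n b μ Y) Z - gg n (A2 n b μ X) Z * gg n (A2 n b μ Y) W)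
  + (gg n (A3 n c X) W * gg n (A3 n c Y) Z - gg n (A3 n c X) Z * gg n (A3 n c Y) W)
  + k * (gg n X W * gg n Y Z - gg n X Z * gg n Y W)

/-- The Ricci tensor `Ricc(X,Y) = ∑ i, R(E_i, X, Y, E_i)`. -/
def Ricc (n : ℕ) (a b c μ k : ℝ) (X Y : Fin n → ℝ) : ℝ :=
  ∑ i, Rt n a b c μ k (E n i) X Y (E n i)

/-- The scalar curvature `τ`. -/
def tau (n : ℕ) (a b c μ k : ℝ) : ℝ := ∑ i, Ricc n a b c μ k (E n i) (E n i)

/-- The Kulkarni–Nomizu product of two bilinear forms. -/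
def KN (n : ℕ) (A B : (Fin n → ℝ) → (Fin n → ℝ) → ℝ) (X1 X2 X3 X4 : Fin n → ℝ) : ℝ :=
  A X1 X4 * B X2 X3 + A X2 X3 * B X1 X4 - A X1 X3 * B X2 X4 - A X2 X4 * B X1 X3

/-- The Weyl conformal curvature tensor `C`. -/
def Ct (n : ℕ) (a b c μ k : ℝ) (X Y Z W : Fin n → ℝ) : ℝ :=
  Rt n a b c μ k X Y Z W
    - (1 / ((n : ℝ) - 2)) * KN n (gg n) (Ricc n a b c μ k) X Y Z W
    + (tau n a b c μ k / (2 * ((n : ℝ) - 1) * ((n : ℝ) - 2))) * KN n (gg n) (gg n) X Y Z W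

/-- The endomorphism `(X ∧_A Y)` applied to `Z`. -/
def wedge (n : ℕ) (A : (Fin n → ℝ) → (Fin n → ℝ) → ℝ) (X Y Z : Fin n → ℝ) : Fin n → ℝ :=
  fun j => A Y Z * X j - A X Z * Y j

/-- The endomorphism determined by `g(Op(X,Y)Z, W) = T(X,Y,Z,W)`:
its `j`-th component is `T(X,Y,Z,E_j)`. -/
def curvOp (n : ℕ) (T : (Fin n → ℝ) → (Fin n → ℝ) → (Fin n → ℝ) → (Fin n → ℝ) → ℝ)
    (X Y Z : Fin n → ℝ) : Fin n → ℝ := fun j => T X Y Z (E n j)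

/-- Derivation-type action of a family of operators on a (0,4)-tensor. -/
def dotT (n : ℕ) (Op : (Fin n → ℝ) → (Fin n → ℝ) → (Fin n → ℝ) → (Fin n → ℝ))
    (T : (Fin n → ℝ) → (Fin n → ℝ) → (Fin n → ℝ) → (Fin n → ℝ) → ℝ)
    (X1 X2 X3 X4 X Y : Fin n → ℝ) : ℝ :=
  - T (Op X Y X1) X2 X3 X4 - T X1 (Op X Y X2) X3 X4
  - T X1 X2 (Op X Y X3) X4 - T X1 X2 X3 (Op X Y X4)

/-- The (0,6)-tensor `R · C`. -/
def RC (n : ℕ) (a b c μ k : ℝ) :=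
  dotT n (fun X Y => curvOp n (Rt n a b c μ k) X Y) (Ct n a b c μ k)

/-- The (0,6)-tensor `C · R`. -/
def CR (n : ℕ) (a b c μ k : ℝ) :=
  dotT n (fun X Y => curvOp n (Ct n a b c μ k) X Y) (Rt n a b c μ k)

/-- The Tachibana tensor `Q(A, T)`. -/
def Q (n : ℕ) (A : (Fin n → ℝ) → (Fin n → ℝ) → ℝ)
    (T : (Fin n → ℝ) → (Fin n → ℝ) → (Fin n → ℝ) → (Fin n → ℝ) → ℝ) :=
  dotT n (fun X Y => wedge n A X Y) T

section Machinery

variable {n : ℕ}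

lemma gg_comm (x y : Fin n → ℝ) : gg n x y = gg n y x := by
  simp [gg, mul_comm]

lemma gg_E_right (x : Fin n → ℝ) (i : Fin n) : gg n x (E n i) = x i := by
  simp [gg, E]

lemma gg_E_left (x : Fin n → ℝ) (i : Fin n) : gg n (E n i) x = x i := by
  simp [gg, E]

lemma coord_lt {j : ℕ} (h : j < n) (x : Fin n → ℝ) : coord n x j = x ⟨j, h⟩ :=
  dif_pos h

lemma coord_E {j : ℕ} (h : j < n) (i : Fin n) :
    coord n (E n i) j = if (⟨j, h⟩ : Fin n) = i then 1 else 0 := by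
  rw [coord_lt h]; rfl

lemma gg_EE (i j : Fin n) : gg n (E n i) (E n j) = if i = j then 1 else 0 := by
  rw [gg_E_left]; simp [E, eq_comm]

/-- The restricted symmetric form `s`. -/
def sP (n : ℕ) (x y : Fin n → ℝ) : ℝ :=
  coord n x 0 * coord n y 1 + coord n x 1 * coord n y 0

/-- The restricted symmetric form `d`. -/
def dP (n : ℕ) (x y : Fin n → ℝ) : ℝ :=
  coord n x 0 * coord n y 0 - coord n x 1 * coord n y 1

/-- The restricted symmetric form `e`. -/
def eP (n : ℕ) (x y : Fin n → ℝ) : ℝ :=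
  coord n x 0 * coord n y 0 + coord n x 1 * coord n y 1

lemma gA3 (c : ℝ) (x y : Fin n → ℝ) : gg n (A3 n c x) y = c * gg n x y := by
  simp [gg, A3, Finset.mul_sum, mul_assoc]

lemma gA1 (h1 : 1 < n) (a μ : ℝ) (x y : Fin n → ℝ) :
    gg n (A1 n a μ x) y = a * gg n x y + μ * sP n x y := by
  have h0 : 0 < n := by omega
  have key : ∀ i : Fin n, A1 n a μ x i * y i
      = a * (x i * y i)
        + ((if i = (⟨0, h0⟩ : Fin n) then μ * coord n x 1 * y i else 0)
          + (if i = (⟨1, h1⟩ : Fin n) then μ * coord n x 0 * y i else 0)) := by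
    intro i
    by_cases hi0 : (i : ℕ) = 0
    · have hi : i = ⟨0, h0⟩ := Fin.ext hi0
      subst hi
      simp [A1, Fin.ext_iff]
      ring
    · by_cases hi1 : (i : ℕ) = 1
      · have hi : i = ⟨1, h1⟩ := Fin.ext hi1
        subst hi
        simp [A1, Fin.ext_iff]
        ring
      · simp [A1, hi0, hi1, Fin.ext_iff]
        ring
  unfold gg
  rw [Finset.sum_congr rfl fun i _ => key i]
  rw [Finset.sum_add_distrib, Finset.sum_add_distrib, Finset.sum_ite_eq',
    Finset.sum_ite_eq', ← Finset.mul_sum]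
  simp only [Finset.mem_univ, if_true, sP, gg]
  rw [coord_lt h0 y, coord_lt h1 y]
  ring

lemma gA2 (h1 : 1 < n) (b μ : ℝ) (x y : Fin n → ℝ) :
    gg n (A2 n b μ x) y = b * gg n x y + μ * dP n x y := by
  have h0 : 0 < n := by omega
  have key : ∀ i : Fin n, A2 n b μ x i * y i
      = b * (x i * y i)
        + ((if i = (⟨0, h0⟩ : Fin n) then μ * (x i * y i) else 0)
          + (if i = (⟨1, h1⟩ : Fin n) then -(μ * (x i * y i)) else 0)) := by
    intro i
    by_cases hi0 : (i : ℕ) = 0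
    · have hi : i = ⟨0, h0⟩ := Fin.ext hi0
      subst hi
      simp [A2, Fin.ext_iff]
      ring
    · by_cases hi1 : (i : ℕ) = 1
      · have hi : i = ⟨1, h1⟩ := Fin.ext hi1
        subst hi
        simp [A2, Fin.ext_iff]
        ring
      · simp [A2, hi0, hi1, Fin.ext_iff]
        ring
  unfold gg
  rw [Finset.sum_congr rfl fun i _ => key i]
  rw [Finset.sum_add_distrib, Finset.sum_add_distrib, Finset.sum_ite_eq',
    Finset.sum_ite_eq', ← Finset.mul_sum]
  simp only [Finset.mem_univ, if_true, dP, gg]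
  rw [coord_lt h0 x, coord_lt h1 x, coord_lt h0 y, coord_lt h1 y]
  ring

end Machinery
section Machinery2

variable {n : ℕ}

lemma Rt_closed (h1 : 1 < n) (a b c μ k : ℝ) (X Y Z W : Fin n → ℝ) :
    Rt n a b c μ k X Y Z W
      = (a^2 + b^2 + c^2 + k) * (gg n X W * gg n Y Z - gg n X Z * gg n Y W)
        + a * μ * (gg n X W * sP n Y Z + sP n X W * gg n Y Z
            - gg n X Z * sP n Y W - sP n X Z * gg n Y W)
        + b * μ * (gg n X W * dP n Y Z + dP n X W * gg n Y Z
            - gg n X Z * dP n Y W - dP n X Z * gg n Y W)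
        + μ^2 * (sP n X W * sP n Y Z - sP n X Z * sP n Y W
            + dP n X W * dP n Y Z - dP n X Z * dP n Y W) := by
  unfold Rt
  rw [gA1 h1, gA1 h1, gA1 h1, gA1 h1, gA2 h1, gA2 h1, gA2 h1, gA2 h1,
    gA3, gA3, gA3, gA3]
  ring

lemma sum_split (h0 : 0 < n) (h1 : 1 < n) (U V W0 W1 : ℝ) (X Y : Fin n → ℝ)
    (f : Fin n → ℝ)
    (hf : ∀ i, f i = U + V * (X i * Y i)
      + ((if i = (⟨0, h0⟩ : Fin n) then W0 else 0)
        + (if i = (⟨1, h1⟩ : Fin n) then W1 else 0))) :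
    ∑ i, f i = n * U + V * gg n X Y + W0 + W1 := by
  rw [Finset.sum_congr rfl fun i _ => hf i]
  rw [Finset.sum_add_distrib, Finset.sum_add_distrib, Finset.sum_add_distrib,
    Finset.sum_ite_eq', Finset.sum_ite_eq', ← Finset.mul_sum, Finset.sum_const]
  simp only [Finset.mem_univ, if_true, gg, Finset.card_univ, Fintype.card_fin,
    nsmul_eq_mul]
  ring

lemma Ricc_closed (h1 : 1 < n) (a b c μ k : ℝ) (X Y : Fin n → ℝ) :
    Ricc n a b c μ k X Y
      = (a^2 + b^2 + c^2 + k) * ((n : ℝ) - 1) * gg n X Y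
        + ((n : ℝ) - 2) * μ * (a * sP n X Y + b * dP n X Y)
        - 2 * μ^2 * eP n X Y := by
  have h0 : 0 < n := by omega
  unfold Ricc
  rw [sum_split h0 h1
    ((a^2 + b^2 + c^2 + k) * gg n X Y + a * μ * sP n X Y + b * μ * dP n X Y)
    (-(a^2 + b^2 + c^2 + k))
    (-(a * μ) * sP n X Y + b * μ * (gg n X Y - 2 * (coord n X 0 * coord n Y 0))
      + μ^2 * (dP n X Y - eP n X Y))
    (-(a * μ) * sP n X Y + b * μ * (-(gg n X Y) + 2 * (coord n X 1 * coord n Y 1))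
      + μ^2 * (-(dP n X Y) - eP n X Y))
    X Y _ ?_]
  · simp only [sP, dP, eP]; ring
  intro i
  rw [Rt_closed h1]
  rw [gg_EE, gg_E_left, gg_E_right]
  simp only [sP, dP, eP, coord_E h0, coord_E h1]
  by_cases hi0 : i = ⟨0, h0⟩
  · subst hi0
    simp only [if_pos rfl, Fin.mk.injEq, if_true]
    norm_num
    rw [coord_lt h0 X, coord_lt h0 Y, coord_lt h1 X, coord_lt h1 Y]
    ring
  · by_cases hi1 : i = ⟨1, h1⟩
    · subst hi1
      simp only [Fin.mk.injEq, if_pos rfl]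
      norm_num
      rw [coord_lt h0 X, coord_lt h0 Y, coord_lt h1 X, coord_lt h1 Y]
      ring
    · have hi0' : ¬((⟨0, h0⟩ : Fin n) = i) := fun h => hi0 h.symm
      have hi1' : ¬((⟨1, h1⟩ : Fin n) = i) := fun h => hi1 h.symm
      simp only [if_neg hi0, if_neg hi1, if_neg hi0', if_neg hi1', if_true]
      rw [coord_lt h0 X, coord_lt h0 Y, coord_lt h1 X, coord_lt h1 Y]
      ring

lemma tau_closed (h1 : 1 < n) (a b c μ k : ℝ) :
    tau n a b c μ k = (a^2 + b^2 + c^2 + k) * (n : ℝ) * ((n : ℝ) - 1) - 4 * μ^2 := by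
  have h0 : 0 < n := by omega
  unfold tau
  rw [sum_split h0 h1
    ((a^2 + b^2 + c^2 + k) * ((n : ℝ) - 1)) 0
    (((n : ℝ) - 2) * μ * b - 2 * μ^2)
    (-(((n : ℝ) - 2) * μ * b) - 2 * μ^2)
    (E n ⟨0, h0⟩) (E n ⟨0, h0⟩) _ ?_]
  · ring
  intro i
  rw [Ricc_closed h1, gg_EE]
  simp only [sP, dP, eP, coord_E h0, coord_E h1, if_pos rfl]
  by_cases hi0 : i = ⟨0, h0⟩
  · subst hi0
    simp only [Fin.mk.injEq, if_pos rfl]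
    norm_num
    try ring
  · by_cases hi1 : i = ⟨1, h1⟩
    · subst hi1
      simp only [Fin.mk.injEq, if_pos rfl]
      norm_num
      try ring
    · have hi0' : ¬((⟨0, h0⟩ : Fin n) = i) := fun h => hi0 h.symm
      have hi1' : ¬((⟨1, h1⟩ : Fin n) = i) := fun h => hi1 h.symm
      simp only [if_neg hi0, if_neg hi1, if_neg hi0', if_neg hi1', if_true]
      ring

end Machinery2

section Machinery3

variable {n : ℕ}

lemma Ct_master (h1 : 1 < n) (a b c μ k : ℝ) (X Y Z : Fin n → ℝ) :
    ∃ PX PY P0 P1 : ℝ, ∀ W, Ct n a b c μ k X Y Z W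
      = PX * gg n X W + PY * gg n Y W + P0 * coord n W 0 + P1 * coord n W 1 := by
  refine ⟨(k*(gg n Y Z) + (2)*k*(1/((n:ℝ)-2))*(gg n Y Z) + (-2)*k*((n:ℝ))*(1/(2*((n:ℝ)-1)*((n:ℝ)-2)))*(gg n Y Z) + (-2)*k*((n:ℝ))*(1/((n:ℝ)-2))*(gg n Y Z) + (2)*k*((n:ℝ))*((n:ℝ))*(1/(2*((n:ℝ)-1)*((n:ℝ)-2)))*(gg n Y Z) + (-8)*μ*μ*(1/(2*((n:ℝ)-1)*((n:ℝ)-2)))*(gg n Y Z) + (2)*μ*μ*(1/((n:ℝ)-2))*(coord n Y 1)*(coord n Z 1) + (2)*μ*μ*(1/((n:ℝ)-2))*(coord n Y 0)*(coord n Z 0) + c*c*(gg n Y Z) + (2)*c*c*(1/((n:ℝ)-2))*(gg n Y Z) + (-2)*c*c*((n:ℝ))*(1/(2*((n:ℝ)-1)*((n:ℝ)-2)))*(gg n Y Z) + (-2)*c*c*((n:ℝ))*(1/((n:ℝ)-2))*(gg n Y Z) + (2)*c*c*((n:ℝ))*((n:ℝ))*(1/(2*((n:ℝ)-1)*((n:ℝ)-2)))*(gg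 n Y Z) + (-1)*b*μ*(coord n Y 1)*(coord n Z 1) + b*μ*(coord n Y 0)*(coord n Z 0) + (-2)*b*μ*(1/((n:ℝ)-2))*(coord n Y 1)*(coord n Z 1) + (2)*b*μ*(1/((n:ℝ)-2))*(coord n Y 0)*(coord n Z 0) + b*μ*((n:ℝ))*(1/((n:ℝ)-2))*(coord n Y 1)*(coord n Z 1) + (-1)*b*μ*((n:ℝ))*(1/((n:ℝ)-2))*(coord n Y 0)*(coord n Z 0) + b*b*(gg n Y Z) + (2)*b*b*(1/((n:ℝ)-2))*(gg n Y Z) + (-2)*b*b*((n:ℝ))*(1/(2*((n:ℝ)-1)*((n:ℝ)-2)))*(gg n Y Z) + (-2)*b*b*((n:ℝ))*(1/((n:ℝ)-2))*(gg n Y Z) + (2)*b*b*((n:ℝ))*((n:ℝ))*(1/(2*((n:ℝ)-1)*((n:ℝ)-2)))*(gg n Y Z) + a*μ*(coord n Y 1)*(coord n Z 0) + a*μ*(coord n Y 0)*(coord n Z 1) + (2)*a*μ*(1/((n:ℝ)-2))*(coord n Y 1)*(coord n Z 0) + (2)*a*μ*(1/((n:ℝ)-2))*(coord n Y 0)*(coord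 n Z 1) + (-1)*a*μ*((n:ℝ))*(1/((n:ℝ)-2))*(coord n Y 1)*(coord n Z 0) + (-1)*a*μ*((n:ℝ))*(1/((n:ℝ)-2))*(coord n Y 0)*(coord n Z 1) + a*a*(gg n Y Z) + (2)*a*a*(1/((n:ℝ)-2))*(gg n Y Z) + (-2)*a*a*((n:ℝ))*(1/(2*((n:ℝ)-1)*((n:ℝ)-2)))*(gg n Y Z) + (-2)*a*a*((n:ℝ))*(1/((n:ℝ)-2))*(gg n Y Z) + (2)*a*a*((n:ℝ))*((n:ℝ))*(1/(2*((n:ℝ)-1)*((n:ℝ)-2)))*(gg n Y Z)),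
    ((-1)*k*(gg n X Z) + (-2)*k*(1/((n:ℝ)-2))*(gg n X Z) + (2)*k*((n:ℝ))*(1/(2*((n:ℝ)-1)*((n:ℝ)-2)))*(gg n X Z) + (2)*k*((n:ℝ))*(1/((n:ℝ)-2))*(gg n X Z) + (-2)*k*((n:ℝ))*((n:ℝ))*(1/(2*((n:ℝ)-1)*((n:ℝ)-2)))*(gg n X Z) + (8)*μ*μ*(1/(2*((n:ℝ)-1)*((n:ℝ)-2)))*(gg n X Z) + (-2)*μ*μ*(1/((n:ℝ)-2))*(coord n X 1)*(coord n Z 1) + (-2)*μ*μ*(1/((n:ℝ)-2))*(coord n X 0)*(coord n Z 0) + (-1)*c*c*(gg n X Z) + (-2)*c*c*(1/((n:ℝ)-2))*(gg n X Z) + (2)*c*c*((n:ℝ))*(1/(2*((n:ℝ)-1)*((n:ℝ)-2)))*(gg n X Z) + (2)*c*c*((n:ℝ))*(1/((n:ℝ)-2))*(gg n X Z) + (-2)*c*c*((n:ℝ))*((n:ℝ))*(1/(2*((n:ℝ)-1)*((n:ℝ)-2)))*(gg n X Z) + b*μ*(coord n X 1)*(coord n Z 1) + (-1)*b*μ*(coord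 n X 0)*(coord n Z 0) + (2)*b*μ*(1/((n:ℝ)-2))*(coord n X 1)*(coord n Z 1) + (-2)*b*μ*(1/((n:ℝ)-2))*(coord n X 0)*(coord n Z 0) + (-1)*b*μ*((n:ℝ))*(1/((n:ℝ)-2))*(coord n X 1)*(coord n Z 1) + b*μ*((n:ℝ))*(1/((n:ℝ)-2))*(coord n X 0)*(coord n Z 0) + (-1)*b*b*(gg n X Z) + (-2)*b*b*(1/((n:ℝ)-2))*(gg n X Z) + (2)*b*b*((n:ℝ))*(1/(2*((n:ℝ)-1)*((n:ℝ)-2)))*(gg n X Z) + (2)*b*b*((n:ℝ))*(1/((n:ℝ)-2))*(gg n X Z) + (-2)*b*b*((n:ℝ))*((n:ℝ))*(1/(2*((n:ℝ)-1)*((n:ℝ)-2)))*(gg n X Z) + (-1)*a*μ*(coord n X 1)*(coord n Z 0) + (-1)*a*μ*(coord n X 0)*(coord n Z 1) + (-2)*a*μ*(1/((n:ℝ)-2))*(coord n X 1)*(coord n Z 0) + (-2)*a*μ*(1/((n:ℝ)-2))*(coord n X 0)*(coord n Z 1) + a*μ*((n:ℝ))*(1/((n:ℝ)-2))*(coord n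 X 1)*(coord n Z 0) + a*μ*((n:ℝ))*(1/((n:ℝ)-2))*(coord n X 0)*(coord n Z 1) + (-1)*a*a*(gg n X Z) + (-2)*a*a*(1/((n:ℝ)-2))*(gg n X Z) + (2)*a*a*((n:ℝ))*(1/(2*((n:ℝ)-1)*((n:ℝ)-2)))*(gg n X Z) + (2)*a*a*((n:ℝ))*(1/((n:ℝ)-2))*(gg n X Z) + (-2)*a*a*((n:ℝ))*((n:ℝ))*(1/(2*((n:ℝ)-1)*((n:ℝ)-2)))*(gg n X Z)),
    ((2)*μ*μ*(coord n X 1)*(coord n Y 0)*(coord n Z 1) + (-2)*μ*μ*(coord n X 0)*(coord n Y 1)*(coord n Z 1) + (2)*μ*μ*(1/((n:ℝ)-2))*(gg n Y Z)*(coord n X 0) + (-2)*μ*μ*(1/((n:ℝ)-2))*(gg n X Z)*(coord n Y 0) + b*μ*(gg n Y Z)*(coord n X 0) + (-1)*b*μ*(gg n X Z)*(coord n Y 0) + (2)*b*μ*(1/((n:ℝ)-2))*(gg n Y Z)*(coord n X 0) + (-2)*b*μ*(1/((n:ℝ)-2))*(gg n X Z)*(coord n Y 0) + (-1)*b*μ*((n:ℝ))*(1/((n:ℝ)-2))*(gg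 n Y Z)*(coord n X 0) + b*μ*((n:ℝ))*(1/((n:ℝ)-2))*(gg n X Z)*(coord n Y 0) + a*μ*(gg n Y Z)*(coord n X 1) + (-1)*a*μ*(gg n X Z)*(coord n Y 1) + (2)*a*μ*(1/((n:ℝ)-2))*(gg n Y Z)*(coord n X 1) + (-2)*a*μ*(1/((n:ℝ)-2))*(gg n X Z)*(coord n Y 1) + (-1)*a*μ*((n:ℝ))*(1/((n:ℝ)-2))*(gg n Y Z)*(coord n X 1) + a*μ*((n:ℝ))*(1/((n:ℝ)-2))*(gg n X Z)*(coord n Y 1)),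
    ((-2)*μ*μ*(coord n X 1)*(coord n Y 0)*(coord n Z 0) + (2)*μ*μ*(coord n X 0)*(coord n Y 1)*(coord n Z 0) + (2)*μ*μ*(1/((n:ℝ)-2))*(gg n Y Z)*(coord n X 1) + (-2)*μ*μ*(1/((n:ℝ)-2))*(gg n X Z)*(coord n Y 1) + (-1)*b*μ*(gg n Y Z)*(coord n X 1) + b*μ*(gg n X Z)*(coord n Y 1) + (-2)*b*μ*(1/((n:ℝ)-2))*(gg n Y Z)*(coord n X 1) + (2)*b*μ*(1/((n:ℝ)-2))*(gg n X Z)*(coord n Y 1) + b*μ*((n:ℝ))*(1/((n:ℝ)-2))*(gg n Y Z)*(coord n X 1) + (-1)*b*μ*((n:ℝ))*(1/((n:ℝ)-2))*(gg n X Z)*(coord n Y 1) + a*μ*(gg n Y Z)*(coord n X 0) + (-1)*a*μ*(gg n X Z)*(coord n Y 0) + (2)*a*μ*(1/((n:ℝ)-2))*(gg n Y Z)*(coord n X 0) + (-2)*a*μ*(1/((n:ℝ)-2))*(gg n X Z)*(coord n Y 0) + (-1)*a*μ*((n:ℝ))*(1/((n:ℝ)-2))*(gg n Y Z)*(coord n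 X 0) + a*μ*((n:ℝ))*(1/((n:ℝ)-2))*(gg n X Z)*(coord n Y 0)), fun W => ?_⟩
  rw [Ct, Rt_closed h1, tau_closed h1]
  simp only [KN, Ricc_closed h1]
  simp only [sP, dP, eP]
  ring

lemma gg_curvOp (h1 : 1 < n)
    (T : (Fin n → ℝ) → (Fin n → ℝ) → (Fin n → ℝ) → (Fin n → ℝ) → ℝ)
    (X Y Z : Fin n → ℝ) (PX PY P0 P1 : ℝ)
    (hT : ∀ W, T X Y Z W = PX * gg n X W + PY * gg n Y W + P0 * coord n W 0 + P1 * coord n W 1)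
    (W : Fin n → ℝ) :
    gg n (curvOp n T X Y Z) W = T X Y Z W := by
  have h0 : 0 < n := by omega
  have key : ∀ j : Fin n, curvOp n T X Y Z j * W j
      = PX * (X j * W j) + PY * (Y j * W j)
        + ((if j = (⟨0, h0⟩ : Fin n) then P0 * W j else 0)
          + (if j = (⟨1, h1⟩ : Fin n) then P1 * W j else 0)) := by
    intro j
    show T X Y Z (E n j) * W j = _
    rw [hT (E n j), gg_E_right, gg_E_right, coord_E h0, coord_E h1]
    by_cases hj0 : j = ⟨0, h0⟩
    · subst hj0
      simp only [if_pos rfl, Fin.mk.injEq, if_true]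
      norm_num
      try ring
    · by_cases hj1 : j = ⟨1, h1⟩
      · subst hj1
        simp only [if_pos rfl, Fin.mk.injEq, if_true]
        norm_num
        try ring
      · have hj0' : ¬((⟨0, h0⟩ : Fin n) = j) := fun h => hj0 h.symm
        have hj1' : ¬((⟨1, h1⟩ : Fin n) = j) := fun h => hj1 h.symm
        simp only [if_neg hj0, if_neg hj1, if_neg hj0', if_neg hj1', if_true]
        ring
  show (∑ j, curvOp n T X Y Z j * W j) = _
  rw [Finset.sum_congr rfl fun j _ => key j]
  rw [Finset.sum_add_distrib, Finset.sum_add_distrib, Finset.sum_add_distrib,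
    Finset.sum_ite_eq', Finset.sum_ite_eq', ← Finset.mul_sum, ← Finset.mul_sum]
  simp only [Finset.mem_univ, if_true]
  rw [hT W]
  simp only [gg]
  rw [coord_lt h0 W, coord_lt h1 W]
  ring

lemma coord_curvOp {j : ℕ} (h : j < n)
    (T : (Fin n → ℝ) → (Fin n → ℝ) → (Fin n → ℝ) → (Fin n → ℝ) → ℝ)
    (X Y Z : Fin n → ℝ) :
    coord n (curvOp n T X Y Z) j = T X Y Z (E n ⟨j, h⟩) := by
  rw [coord_lt h]; rfl

lemma gg_zero_left (x : Fin n → ℝ) : gg n (fun _ => (0:ℝ)) x = 0 := by simp [gg]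

lemma gg_zero_right (x : Fin n → ℝ) : gg n x (fun _ => (0:ℝ)) = 0 := by simp [gg]

lemma coord_zero (j : ℕ) : coord n (fun _ => (0:ℝ)) j = 0 := by
  unfold coord; split <;> rfl

end Machinery3

section Machinery4

variable {n : ℕ}

lemma Ct_zero (h4 : 4 ≤ n) (a b c k : ℝ) (X Y Z W : Fin n → ℝ) :
    Ct n a b c 0 k X Y Z W = 0 := by
  have h1 : 1 < n := by omega
  have hn : (4:ℝ) ≤ (n:ℝ) := by exact_mod_cast h4
  have e1 : ((n:ℝ) - 1) ≠ 0 := ne_of_gt (by linarith)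
  have e2 : ((n:ℝ) - 2) ≠ 0 := ne_of_gt (by linarith)
  rw [Ct, Rt_closed h1, tau_closed h1]
  simp only [KN, Ricc_closed h1]
  field_simp
  ring

lemma CR_zero (h4 : 4 ≤ n) (a b c k : ℝ) (X1 X2 X3 X4 X Y : Fin n → ℝ) :
    CR n a b c 0 k X1 X2 X3 X4 X Y = 0 := by
  have h1 : 1 < n := by omega
  have hV : ∀ U V Z2 : Fin n → ℝ, curvOp n (Ct n a b c 0 k) U V Z2 = fun _ => (0:ℝ) :=
    fun U V Z2 => funext fun j => Ct_zero h4 a b c k U V Z2 (E n j)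
  simp only [CR, dotT, hV]
  rw [Rt_closed h1, Rt_closed h1, Rt_closed h1, Rt_closed h1]
  simp [sP, dP, gg_zero_left, gg_zero_right, coord_zero]

lemma gg_lin_right (α β : ℝ) (U V W : Fin n → ℝ) :
    gg n W (fun j => α * U j - β * V j) = α * gg n W U - β * gg n W V := by
  simp only [gg, Finset.mul_sum, ← Finset.sum_sub_distrib]
  exact Finset.sum_congr rfl fun i _ => by ring

lemma gg_lin_left (α β : ℝ) (U V W : Fin n → ℝ) :
    gg n (fun j => α * U j - β * V j) W = α * gg n U W - β * gg n V W := by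
  rw [gg_comm, gg_lin_right, gg_comm U W, gg_comm V W]

lemma coord_lin (α β : ℝ) (U V : Fin n → ℝ) (j : ℕ) :
    coord n (fun i => α * U i - β * V i) j = α * coord n U j - β * coord n V j := by
  unfold coord
  split <;> simp

end Machinery4

section Machinery5

variable {n : ℕ}

lemma gg_wedge_left (A : (Fin n → ℝ) → (Fin n → ℝ) → ℝ) (X Y Z W : Fin n → ℝ) :
    gg n (wedge n A X Y Z) W = A Y Z * gg n X W - A X Z * gg n Y W :=
  gg_lin_left (A Y Z) (A X Z) X Y W

lemma gg_wedge_right (A : (Fin n → ℝ) → (Fin n → ℝ) → ℝ) (X Y Z W : Fin n → ℝ) :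
    gg n W (wedge n A X Y Z) = A Y Z * gg n W X - A X Z * gg n W Y := by
  rw [gg_comm, gg_wedge_left, gg_comm X W, gg_comm Y W]

lemma coord_wedge (A : (Fin n → ℝ) → (Fin n → ℝ) → ℝ) (X Y Z : Fin n → ℝ) (j : ℕ) :
    coord n (wedge n A X Y Z) j = A Y Z * coord n X j - A X Z * coord n Y j :=
  coord_lin (A Y Z) (A X Z) X Y j

end Machinery5
set_option maxHeartbeats 2000000 in
/-- `C·R` and `Q(Ricc, R)` are linearly dependent iff `μ = 0`. -/
theorem statement_18 (n : ℕ) (hn : 4 ≤ n) (a b c μ k : ℝ) :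
    (∃ L : ℝ, ∀ X1 X2 X3 X4 X Y : Fin n → ℝ,
        CR n a b c μ k X1 X2 X3 X4 X Y
          = L * Q n (Ricc n a b c μ k) (Rt n a b c μ k) X1 X2 X3 X4 X Y) ↔ μ = 0 := by
  have h0 : 0 < n := by omega
  have h1 : 1 < n := by omega
  have h2 : 2 < n := by omega
  have h3 : 3 < n := by omega
  have hnR : (4:ℝ) ≤ (n:ℝ) := by exact_mod_cast hn
  have e1 : ((n:ℝ)-1) ≠ 0 := ne_of_gt (by linarith)
  have e2 : ((n:ℝ)-2) ≠ 0 := ne_of_gt (by linarith)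
  have e3 : ((n:ℝ)-3) ≠ 0 := ne_of_gt (by linarith)
  have eD : (((n:ℝ)-1)*((n:ℝ)-2)) ≠ 0 := mul_ne_zero e1 e2
  constructor
  · rintro ⟨L, hL⟩
    have hv7 : CR n a b c μ k (E n ⟨0,h0⟩) (E n ⟨2,h2⟩) (E n ⟨2,h2⟩) (E n ⟨3,h3⟩) (E n ⟨1,h1⟩) (E n ⟨3,h3⟩)
        = -(2*a*μ^3*((n:ℝ)-3)) / (((n:ℝ)-1)*((n:ℝ)-2)) := by
      obtain ⟨PA0,PB0,PC0,PD0,hP0⟩ := Ct_master h1 a b c μ k (E n ⟨1,h1⟩) (E n ⟨3,h3⟩) (E n ⟨0,h0⟩)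
      obtain ⟨PA1,PB1,PC1,PD1,hP1⟩ := Ct_master h1 a b c μ k (E n ⟨1,h1⟩) (E n ⟨3,h3⟩) (E n ⟨2,h2⟩)
      obtain ⟨PA2,PB2,PC2,PD2,hP2⟩ := Ct_master h1 a b c μ k (E n ⟨1,h1⟩) (E n ⟨3,h3⟩) (E n ⟨3,h3⟩)
      have g0 : ∀ W, gg n (curvOp n (Ct n a b c μ k) (E n ⟨1,h1⟩) (E n ⟨3,h3⟩) (E n ⟨0,h0⟩)) W
          = Ct n a b c μ k (E n ⟨1,h1⟩) (E n ⟨3,h3⟩) (E n ⟨0,h0⟩) W :=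
        gg_curvOp h1 _ _ _ _ _ _ _ _ hP0
      have g0' : ∀ W, gg n W (curvOp n (Ct n a b c μ k) (E n ⟨1,h1⟩) (E n ⟨3,h3⟩) (E n ⟨0,h0⟩))
          = Ct n a b c μ k (E n ⟨1,h1⟩) (E n ⟨3,h3⟩) (E n ⟨0,h0⟩) W := fun W => by
        rw [gg_comm]; exact g0 W
      have g1 : ∀ W, gg n (curvOp n (Ct n a b c μ k) (E n ⟨1,h1⟩) (E n ⟨3,h3⟩) (E n ⟨2,h2⟩)) W
          = Ct n a b c μ k (E n ⟨1,h1⟩) (E n ⟨3,h3⟩) (E n ⟨2,h2⟩) W :=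
        gg_curvOp h1 _ _ _ _ _ _ _ _ hP1
      have g1' : ∀ W, gg n W (curvOp n (Ct n a b c μ k) (E n ⟨1,h1⟩) (E n ⟨3,h3⟩) (E n ⟨2,h2⟩))
          = Ct n a b c μ k (E n ⟨1,h1⟩) (E n ⟨3,h3⟩) (E n ⟨2,h2⟩) W := fun W => by
        rw [gg_comm]; exact g1 W
      have g2 : ∀ W, gg n (curvOp n (Ct n a b c μ k) (E n ⟨1,h1⟩) (E n ⟨3,h3⟩) (E n ⟨3,h3⟩)) W
          = Ct n a b c μ k (E n ⟨1,h1⟩) (E n ⟨3,h3⟩) (E n ⟨3,h3⟩) W :=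
        gg_curvOp h1 _ _ _ _ _ _ _ _ hP2
      have g2' : ∀ W, gg n W (curvOp n (Ct n a b c μ k) (E n ⟨1,h1⟩) (E n ⟨3,h3⟩) (E n ⟨3,h3⟩))
          = Ct n a b c μ k (E n ⟨1,h1⟩) (E n ⟨3,h3⟩) (E n ⟨3,h3⟩) W := fun W => by
        rw [gg_comm]; exact g2 W
      simp only [CR, dotT]
      simp only [Rt_closed h1, sP, dP, eP]
      simp only [g0, g0', g1, g1', g2, g2', coord_curvOp h0, coord_curvOp h1]
      simp only [Ct, KN, Rt_closed h1, Ricc_closed h1, tau_closed h1, sP, dP, eP]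
      simp only [gg_EE, coord_E h0, coord_E h1, Fin.mk.injEq]
      norm_num
      field_simp
      ring
    have hq7 : Q n (Ricc n a b c μ k) (Rt n a b c μ k)
        (E n ⟨0,h0⟩) (E n ⟨2,h2⟩) (E n ⟨2,h2⟩) (E n ⟨3,h3⟩) (E n ⟨1,h1⟩) (E n ⟨3,h3⟩)
        = -(a*μ*(a^2+b^2+c^2+k)) := by
      simp only [Q, dotT]
      simp only [Rt_closed h1, sP, dP, eP]
      simp only [gg_wedge_left, gg_wedge_right, coord_wedge]
      simp only [Ricc_closed h1, sP, dP, eP]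
      simp only [gg_EE, coord_E h0, coord_E h1, Fin.mk.injEq]
      norm_num
      ring
    have hv6 : CR n a b c μ k (E n ⟨0,h0⟩) (E n ⟨2,h2⟩) (E n ⟨2,h2⟩) (E n ⟨3,h3⟩) (E n ⟨0,h0⟩) (E n ⟨3,h3⟩)
        = -(2*b*μ^3*((n:ℝ)-3)) / (((n:ℝ)-1)*((n:ℝ)-2)) := by
      obtain ⟨PA0,PB0,PC0,PD0,hP0⟩ := Ct_master h1 a b c μ k (E n ⟨0,h0⟩) (E n ⟨3,h3⟩) (E n ⟨0,h0⟩)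
      obtain ⟨PA1,PB1,PC1,PD1,hP1⟩ := Ct_master h1 a b c μ k (E n ⟨0,h0⟩) (E n ⟨3,h3⟩) (E n ⟨2,h2⟩)
      obtain ⟨PA2,PB2,PC2,PD2,hP2⟩ := Ct_master h1 a b c μ k (E n ⟨0,h0⟩) (E n ⟨3,h3⟩) (E n ⟨3,h3⟩)
      have g0 : ∀ W, gg n (curvOp n (Ct n a b c μ k) (E n ⟨0,h0⟩) (E n ⟨3,h3⟩) (E n ⟨0,h0⟩)) W
          = Ct n a b c μ k (E n ⟨0,h0⟩) (E n ⟨3,h3⟩) (E n ⟨0,h0⟩) W :=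
        gg_curvOp h1 _ _ _ _ _ _ _ _ hP0
      have g0' : ∀ W, gg n W (curvOp n (Ct n a b c μ k) (E n ⟨0,h0⟩) (E n ⟨3,h3⟩) (E n ⟨0,h0⟩))
          = Ct n a b c μ k (E n ⟨0,h0⟩) (E n ⟨3,h3⟩) (E n ⟨0,h0⟩) W := fun W => by
        rw [gg_comm]; exact g0 W
      have g1 : ∀ W, gg n (curvOp n (Ct n a b c μ k) (E n ⟨0,h0⟩) (E n ⟨3,h3⟩) (E n ⟨2,h2⟩)) W
          = Ct n a b c μ k (E n ⟨0,h0⟩) (E n ⟨3,h3⟩) (E n ⟨2,h2⟩) W :=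
        gg_curvOp h1 _ _ _ _ _ _ _ _ hP1
      have g1' : ∀ W, gg n W (curvOp n (Ct n a b c μ k) (E n ⟨0,h0⟩) (E n ⟨3,h3⟩) (E n ⟨2,h2⟩))
          = Ct n a b c μ k (E n ⟨0,h0⟩) (E n ⟨3,h3⟩) (E n ⟨2,h2⟩) W := fun W => by
        rw [gg_comm]; exact g1 W
      have g2 : ∀ W, gg n (curvOp n (Ct n a b c μ k) (E n ⟨0,h0⟩) (E n ⟨3,h3⟩) (E n ⟨3,h3⟩)) W
          = Ct n a b c μ k (E n ⟨0,h0⟩) (E n ⟨3,h3⟩) (E n ⟨3,h3⟩) W :=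
        gg_curvOp h1 _ _ _ _ _ _ _ _ hP2
      have g2' : ∀ W, gg n W (curvOp n (Ct n a b c μ k) (E n ⟨0,h0⟩) (E n ⟨3,h3⟩) (E n ⟨3,h3⟩))
          = Ct n a b c μ k (E n ⟨0,h0⟩) (E n ⟨3,h3⟩) (E n ⟨3,h3⟩) W := fun W => by
        rw [gg_comm]; exact g2 W
      simp only [CR, dotT]
      simp only [Rt_closed h1, sP, dP, eP]
      simp only [g0, g0', g1, g1', g2, g2', coord_curvOp h0, coord_curvOp h1]
      simp only [Ct, KN, Rt_closed h1, Ricc_closed h1, tau_closed h1, sP, dP, eP]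
      simp only [gg_EE, coord_E h0, coord_E h1, Fin.mk.injEq]
      norm_num
      field_simp
      ring
    have hq6 : Q n (Ricc n a b c μ k) (Rt n a b c μ k)
        (E n ⟨0,h0⟩) (E n ⟨2,h2⟩) (E n ⟨2,h2⟩) (E n ⟨3,h3⟩) (E n ⟨0,h0⟩) (E n ⟨3,h3⟩)
        = -(μ*(2*μ+b)*(a^2+b^2+c^2+k)) := by
      simp only [Q, dotT]
      simp only [Rt_closed h1, sP, dP, eP]
      simp only [gg_wedge_left, gg_wedge_right, coord_wedge]
      simp only [Ricc_closed h1, sP, dP, eP]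
      simp only [gg_EE, coord_E h0, coord_E h1, Fin.mk.injEq]
      norm_num
      ring
    have hv8 : CR n a b c μ k (E n ⟨1,h1⟩) (E n ⟨2,h2⟩) (E n ⟨2,h2⟩) (E n ⟨3,h3⟩) (E n ⟨1,h1⟩) (E n ⟨3,h3⟩)
        = (2*b*μ^3*((n:ℝ)-3)) / (((n:ℝ)-1)*((n:ℝ)-2)) := by
      obtain ⟨PA0,PB0,PC0,PD0,hP0⟩ := Ct_master h1 a b c μ k (E n ⟨1,h1⟩) (E n ⟨3,h3⟩) (E n ⟨1,h1⟩)
      obtain ⟨PA1,PB1,PC1,PD1,hP1⟩ := Ct_master h1 a b c μ k (E n ⟨1,h1⟩) (E n ⟨3,h3⟩) (E n ⟨2,h2⟩)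
      obtain ⟨PA2,PB2,PC2,PD2,hP2⟩ := Ct_master h1 a b c μ k (E n ⟨1,h1⟩) (E n ⟨3,h3⟩) (E n ⟨3,h3⟩)
      have g0 : ∀ W, gg n (curvOp n (Ct n a b c μ k) (E n ⟨1,h1⟩) (E n ⟨3,h3⟩) (E n ⟨1,h1⟩)) W
          = Ct n a b c μ k (E n ⟨1,h1⟩) (E n ⟨3,h3⟩) (E n ⟨1,h1⟩) W :=
        gg_curvOp h1 _ _ _ _ _ _ _ _ hP0
      have g0' : ∀ W, gg n W (curvOp n (Ct n a b c μ k) (E n ⟨1,h1⟩) (E n ⟨3,h3⟩) (E n ⟨1,h1⟩))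
          = Ct n a b c μ k (E n ⟨1,h1⟩) (E n ⟨3,h3⟩) (E n ⟨1,h1⟩) W := fun W => by
        rw [gg_comm]; exact g0 W
      have g1 : ∀ W, gg n (curvOp n (Ct n a b c μ k) (E n ⟨1,h1⟩) (E n ⟨3,h3⟩) (E n ⟨2,h2⟩)) W
          = Ct n a b c μ k (E n ⟨1,h1⟩) (E n ⟨3,h3⟩) (E n ⟨2,h2⟩) W :=
        gg_curvOp h1 _ _ _ _ _ _ _ _ hP1
      have g1' : ∀ W, gg n W (curvOp n (Ct n a b c μ k) (E n ⟨1,h1⟩) (E n ⟨3,h3⟩) (E n ⟨2,h2⟩))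
          = Ct n a b c μ k (E n ⟨1,h1⟩) (E n ⟨3,h3⟩) (E n ⟨2,h2⟩) W := fun W => by
        rw [gg_comm]; exact g1 W
      have g2 : ∀ W, gg n (curvOp n (Ct n a b c μ k) (E n ⟨1,h1⟩) (E n ⟨3,h3⟩) (E n ⟨3,h3⟩)) W
          = Ct n a b c μ k (E n ⟨1,h1⟩) (E n ⟨3,h3⟩) (E n ⟨3,h3⟩) W :=
        gg_curvOp h1 _ _ _ _ _ _ _ _ hP2
      have g2' : ∀ W, gg n W (curvOp n (Ct n a b c μ k) (E n ⟨1,h1⟩) (E n ⟨3,h3⟩) (E n ⟨3,h3⟩))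
          = Ct n a b c μ k (E n ⟨1,h1⟩) (E n ⟨3,h3⟩) (E n ⟨3,h3⟩) W := fun W => by
        rw [gg_comm]; exact g2 W
      simp only [CR, dotT]
      simp only [Rt_closed h1, sP, dP, eP]
      simp only [g0, g0', g1, g1', g2, g2', coord_curvOp h0, coord_curvOp h1]
      simp only [Ct, KN, Rt_closed h1, Ricc_closed h1, tau_closed h1, sP, dP, eP]
      simp only [gg_EE, coord_E h0, coord_E h1, Fin.mk.injEq]
      norm_num
      field_simp
      ring
    have hq8 : Q n (Ricc n a b c μ k) (Rt n a b c μ k)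
        (E n ⟨1,h1⟩) (E n ⟨2,h2⟩) (E n ⟨2,h2⟩) (E n ⟨3,h3⟩) (E n ⟨1,h1⟩) (E n ⟨3,h3⟩)
        = μ*(b-2*μ)*(a^2+b^2+c^2+k) := by
      simp only [Q, dotT]
      simp only [Rt_closed h1, sP, dP, eP]
      simp only [gg_wedge_left, gg_wedge_right, coord_wedge]
      simp only [Ricc_closed h1, sP, dP, eP]
      simp only [gg_EE, coord_E h0, coord_E h1, Fin.mk.injEq]
      norm_num
      ring
    have hv2 : CR n a b c μ k (E n ⟨0,h0⟩) (E n ⟨1,h1⟩) (E n ⟨0,h0⟩) (E n ⟨2,h2⟩) (E n ⟨1,h1⟩) (E n ⟨2,h2⟩)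
        = -(2*μ^3*((n:ℝ)-3)*(2*μ+b)) / (((n:ℝ)-1)*((n:ℝ)-2)) := by
      obtain ⟨PA0,PB0,PC0,PD0,hP0⟩ := Ct_master h1 a b c μ k (E n ⟨1,h1⟩) (E n ⟨2,h2⟩) (E n ⟨0,h0⟩)
      obtain ⟨PA1,PB1,PC1,PD1,hP1⟩ := Ct_master h1 a b c μ k (E n ⟨1,h1⟩) (E n ⟨2,h2⟩) (E n ⟨1,h1⟩)
      obtain ⟨PA2,PB2,PC2,PD2,hP2⟩ := Ct_master h1 a b c μ k (E n ⟨1,h1⟩) (E n ⟨2,h2⟩) (E n ⟨2,h2⟩)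
      have g0 : ∀ W, gg n (curvOp n (Ct n a b c μ k) (E n ⟨1,h1⟩) (E n ⟨2,h2⟩) (E n ⟨0,h0⟩)) W
          = Ct n a b c μ k (E n ⟨1,h1⟩) (E n ⟨2,h2⟩) (E n ⟨0,h0⟩) W :=
        gg_curvOp h1 _ _ _ _ _ _ _ _ hP0
      have g0' : ∀ W, gg n W (curvOp n (Ct n a b c μ k) (E n ⟨1,h1⟩) (E n ⟨2,h2⟩) (E n ⟨0,h0⟩))
          = Ct n a b c μ k (E n ⟨1,h1⟩) (E n ⟨2,h2⟩) (E n ⟨0,h0⟩) W := fun W => by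
        rw [gg_comm]; exact g0 W
      have g1 : ∀ W, gg n (curvOp n (Ct n a b c μ k) (E n ⟨1,h1⟩) (E n ⟨2,h2⟩) (E n ⟨1,h1⟩)) W
          = Ct n a b c μ k (E n ⟨1,h1⟩) (E n ⟨2,h2⟩) (E n ⟨1,h1⟩) W :=
        gg_curvOp h1 _ _ _ _ _ _ _ _ hP1
      have g1' : ∀ W, gg n W (curvOp n (Ct n a b c μ k) (E n ⟨1,h1⟩) (E n ⟨2,h2⟩) (E n ⟨1,h1⟩))
          = Ct n a b c μ k (E n ⟨1,h1⟩) (E n ⟨2,h2⟩) (E n ⟨1,h1⟩) W := fun W => by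
        rw [gg_comm]; exact g1 W
      have g2 : ∀ W, gg n (curvOp n (Ct n a b c μ k) (E n ⟨1,h1⟩) (E n ⟨2,h2⟩) (E n ⟨2,h2⟩)) W
          = Ct n a b c μ k (E n ⟨1,h1⟩) (E n ⟨2,h2⟩) (E n ⟨2,h2⟩) W :=
        gg_curvOp h1 _ _ _ _ _ _ _ _ hP2
      have g2' : ∀ W, gg n W (curvOp n (Ct n a b c μ k) (E n ⟨1,h1⟩) (E n ⟨2,h2⟩) (E n ⟨2,h2⟩))
          = Ct n a b c μ k (E n ⟨1,h1⟩) (E n ⟨2,h2⟩) (E n ⟨2,h2⟩) W := fun W => by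
        rw [gg_comm]; exact g2 W
      simp only [CR, dotT]
      simp only [Rt_closed h1, sP, dP, eP]
      simp only [g0, g0', g1, g1', g2, g2', coord_curvOp h0, coord_curvOp h1]
      simp only [Ct, KN, Rt_closed h1, Ricc_closed h1, tau_closed h1, sP, dP, eP]
      simp only [gg_EE, coord_E h0, coord_E h1, Fin.mk.injEq]
      norm_num
      field_simp
      ring
    have hq2 : Q n (Ricc n a b c μ k) (Rt n a b c μ k)
        (E n ⟨0,h0⟩) (E n ⟨1,h1⟩) (E n ⟨0,h0⟩) (E n ⟨2,h2⟩) (E n ⟨1,h1⟩) (E n ⟨2,h2⟩)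
        = -(((n:ℝ)-2)*μ^2*(2*k+2*c^2+a^2+b^2)) - b*μ*((a^2+b^2+c^2+k)-2*μ^2) := by
      simp only [Q, dotT]
      simp only [Rt_closed h1, sP, dP, eP]
      simp only [gg_wedge_left, gg_wedge_right, coord_wedge]
      simp only [Ricc_closed h1, sP, dP, eP]
      simp only [gg_EE, coord_E h0, coord_E h1, Fin.mk.injEq]
      norm_num
      ring
    have q7 := hL (E n ⟨0,h0⟩) (E n ⟨2,h2⟩) (E n ⟨2,h2⟩) (E n ⟨3,h3⟩) (E n ⟨1,h1⟩) (E n ⟨3,h3⟩)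
    rw [hv7, hq7, div_eq_iff eD] at q7
    have q6 := hL (E n ⟨0,h0⟩) (E n ⟨2,h2⟩) (E n ⟨2,h2⟩) (E n ⟨3,h3⟩) (E n ⟨0,h0⟩) (E n ⟨3,h3⟩)
    rw [hv6, hq6, div_eq_iff eD] at q6
    have q8 := hL (E n ⟨1,h1⟩) (E n ⟨2,h2⟩) (E n ⟨2,h2⟩) (E n ⟨3,h3⟩) (E n ⟨1,h1⟩) (E n ⟨3,h3⟩)
    rw [hv8, hq8, div_eq_iff eD] at q8
    have q2 := hL (E n ⟨0,h0⟩) (E n ⟨1,h1⟩) (E n ⟨0,h0⟩) (E n ⟨2,h2⟩) (E n ⟨1,h1⟩) (E n ⟨2,h2⟩)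
    rw [hv2, hq2, div_eq_iff eD] at q2
    by_contra hμ
    have hμ4 : μ^4 ≠ 0 := pow_ne_zero 4 hμ
    have hT : L * (a^2+b^2+c^2+k) * μ^2 * (((n:ℝ)-1)*((n:ℝ)-2)) = 0 := by
      linear_combination ((1:ℝ)/4) * q6 + ((1:ℝ)/4) * q8
    have hT' : L * (a^2+b^2+c^2+k) * μ^2 = 0 := by
      rcases mul_eq_zero.mp hT with h | h
      · exact h
      · exact absurd h eD
    have ha1 : a * (μ^4 * ((n:ℝ)-3)) = 0 := by
      linear_combination (-(1:ℝ)/2) * μ * q7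
        + ((a*(((n:ℝ)-1)*((n:ℝ)-2)))/2) * hT'
    have hb1 : b * (μ^4 * ((n:ℝ)-3)) = 0 := by
      linear_combination (-(1:ℝ)/2) * μ * q6
        + ((2*μ+b)*(((n:ℝ)-1)*((n:ℝ)-2))/2) * hT'
    have hmt : μ^4 * ((n:ℝ)-3) ≠ 0 := mul_ne_zero hμ4 e3
    have ha : a = 0 := by
      rcases mul_eq_zero.mp ha1 with h | h
      · exact h
      · exact absurd h hmt
    have hb : b = 0 := by
      rcases mul_eq_zero.mp hb1 with h | h
      · exact h
      · exact absurd h hmt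
    subst ha; subst hb
    have hm : μ^4 * ((n:ℝ)-3) = 0 := by
      linear_combination (-(1:ℝ)/4) * q2
        + ((((n:ℝ)-2)*(((n:ℝ)-1)*((n:ℝ)-2)))/2) * hT'
    exact absurd hm hmt
  · rintro rfl
    exact ⟨0, fun X1 X2 X3 X4 X Y => by rw [CR_zero hn, zero_mul]⟩

end Wintgen
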